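/- Let A and B be symmetric n×n real matrices with eigenvalues λ₁(A) ≥ … ≥ λₙ(A) and λ₁(B) ≥ … ≥ λₙ(B) arranged in decreasing order. Then for each i, |λᵢ(A) - λᵢ(B)| ≤ ‖A - B‖, where ‖·‖ is the Frobenius norm; moreover (Σᵢ (λᵢ(A)-λᵢ(B))²)^{1/2} ≤ ‖A-B‖. -/

import Mathlib

/-!
Write `A = U diag(λ) Uᵀ` and `B = V diag(ν) Vᵀ` with `U`, `V` orthogonal. Then
`tr (A B) = ∑ᵢⱼ λᵢ νⱼ Sᵢⱼ`, where `Sᵢⱼ = ((Uᵀ V)ᵢⱼ)²` is doubly stochastic. By Birkhoff's theorem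
this linear function of `S` is maximised at a permutation matrix, and by the rearrangement
inequality the best permutation pairs the eigenvalues in the same order:
`tr (A B) ≤ ∑ᵢ λᵢ↓ νᵢ↓`, with `↓` denoting decreasing order. Expanding
`‖A - B‖² = tr A² + tr B² - 2 tr (A B)` gives `∑ᵢ (λᵢ↓ - νᵢ↓)² ≤ ‖A - B‖²`, and each single
term is bounded by the whole sum.
-/

open Matrix

/-- Frobenius norm. -/
noncomputable def frob {n : ℕ} (A : Matrix (Fin n) (Fin n) ℝ) : ℝ :=
  Real.sqrt (Matrix.trace (Aᵀ * A))

open Finset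

section

variable {R ι : Type*} [Fintype ι] [DecidableEq ι]

lemma Matrix.submatrix_mem_doublyStochastic [Semiring R] [PartialOrder R] [IsOrderedRing R]
    {S : Matrix ι ι R} (hS : S ∈ doublyStochastic R ι) (σ τ : Equiv.Perm ι) :
    S.submatrix σ τ ∈ doublyStochastic R ι := by
  rw [mem_doublyStochastic_iff_sum] at hS ⊢
  obtain ⟨hnonneg, hrow, hcol⟩ := hS
  exact ⟨fun i j => hnonneg _ _, fun i => (Equiv.sum_comp τ (S (σ i))).trans (hrow _),
    fun j => (Equiv.sum_comp σ (S · (τ j))).trans (hcol _)⟩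

lemma Matrix.of_sq_mem_doublyStochastic {W : Matrix ι ι ℝ} (hW : W ∈ unitaryGroup ι ℝ) :
    (of fun i j => W i j ^ 2) ∈ doublyStochastic ℝ ι := by
  refine mem_doublyStochastic_iff_sum.2 ⟨fun i j => sq_nonneg _, fun i => ?_, fun j => ?_⟩
  · simpa [mul_apply, sq, one_apply] using congr_fun₂ (mem_unitaryGroup_iff.1 hW) i i
  · simpa [mul_apply, sq, one_apply] using congr_fun₂ (mem_unitaryGroup_iff'.1 hW) j j

lemma Monovary.sum_sum_mul_mul_le_sum_mul_of_mem_doublyStochastic [Field R] [LinearOrder R]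
    [IsStrictOrderedRing R] {f g : ι → R} (hfg : Monovary f g) {S : Matrix ι ι R}
    (hS : S ∈ doublyStochastic R ι) :
    ∑ i, ∑ j, f i * g j * S i j ≤ ∑ i, f i * g i := by
  let pairing : Matrix ι ι R → R := fun M => ∑ i, ∑ j, f i * g j * M i j
  have hlin : IsLinearMap R pairing :=
    ⟨fun M N => by simp [pairing, mul_add, sum_add_distrib],
     fun c M => by simp [pairing, mul_sum, mul_left_comm c]⟩
  have hperm : ∀ σ : Equiv.Perm ι, pairing (σ.permMatrix R) = ∑ i, f i * g (σ i) := fun σ => by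
    simp [pairing, Equiv.Perm.permMatrix, PEquiv.toMatrix_apply]
  suffices doublyStochastic R ι ≤ {M | pairing M ≤ ∑ i, f i * g i} from this hS
  rw [doublyStochastic_eq_convexHull_permMatrix]
  refine convexHull_min ?_ (convex_halfSpace_le hlin _)
  rintro _ ⟨σ, rfl⟩
  exact (hperm σ).trans_le hfg.sum_mul_comp_perm_le_sum_mul

lemma Matrix.trace_diagonal_mul_mul_diagonal_mul_transpose [CommSemiring R] (f g : ι → R)
    (W : Matrix ι ι R) :
    trace (diagonal f * W * diagonal g * Wᵀ) = ∑ i, ∑ j, f i * g j * W i j ^ 2 := by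
  simp only [trace, diag, mul_apply, diagonal_apply, transpose_apply, ite_mul, zero_mul,
    mul_ite, mul_zero, sum_ite_eq, sum_ite_eq', mem_univ, if_true]
  exact sum_congr rfl fun i _ => sum_congr rfl fun j _ => by ring

end

namespace Matrix.IsHermitian

variable {ι : Type*} [Fintype ι] [DecidableEq ι] {A B : Matrix ι ι ℝ}

lemma trace_mul_eq_sum (hA : A.IsHermitian) (hB : B.IsHermitian) :
    trace (A * B) = ∑ i, ∑ j, hA.eigenvalues i * hB.eigenvalues j *
      (star (hA.eigenvectorUnitary : Matrix ι ι ℝ) * hB.eigenvectorUnitary) i j ^ 2 := by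
  set U := (hA.eigenvectorUnitary : Matrix ι ι ℝ)
  set V := (hB.eigenvectorUnitary : Matrix ι ι ℝ)
  have hAB : A * B = U * (diagonal hA.eigenvalues * (star U * V) * diagonal hB.eigenvalues) *
      star V := by
    conv_lhs => rw [hA.spectral_theorem, hB.spectral_theorem]
    simp only [RCLike.ofReal_real_eq_id, Function.id_comp, Unitary.conjStarAlgAut_apply]
    noncomm_ring
  have hWt : (star U * V)ᵀ = star V * U := by
    simp [star_eq_conjTranspose, conjTranspose_mul, ← conjTranspose_eq_transpose_of_trivial]
  rw [hAB, trace_mul_cycle, ← hWt, trace_mul_comm]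
  exact trace_diagonal_mul_mul_diagonal_mul_transpose _ _ _

lemma trace_mul_self (hA : A.IsHermitian) : trace (A * A) = ∑ i, hA.eigenvalues i ^ 2 := by
  rw [trace_mul_eq_sum hA hA, mem_unitaryGroup_iff'.1 hA.eigenvectorUnitary.2]
  refine sum_congr rfl fun i _ => ?_
  simp [one_apply, sq]

variable {μA μB : ι → ℝ}

lemma trace_mul_le_sum_mul (hA : A.IsHermitian) (hB : B.IsHermitian) (hμ : Monovary μA μB)
    (σA : Equiv.Perm ι) (hAe : μA = hA.eigenvalues ∘ σA)
    (σB : Equiv.Perm ι) (hBe : μB = hB.eigenvalues ∘ σB) :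
    trace (A * B) ≤ ∑ i, μA i * μB i := by
  set S : Matrix ι ι ℝ := of fun i j =>
    (star (hA.eigenvectorUnitary : Matrix ι ι ℝ) * hB.eigenvectorUnitary) i j ^ 2
  have hS : S ∈ doublyStochastic ℝ ι :=
    of_sq_mem_doublyStochastic (mul_mem (Unitary.star_mem hA.eigenvectorUnitary.2)
      hB.eigenvectorUnitary.2)
  calc trace (A * B) = ∑ i, ∑ j, μA i * μB j * S.submatrix σA σB i j := by
        rw [trace_mul_eq_sum hA hB, ← Equiv.sum_comp σA]
        refine sum_congr rfl fun i _ => ?_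
        rw [← Equiv.sum_comp σB]
        simp [S, hAe, hBe]
    _ ≤ ∑ i, μA i * μB i :=
        hμ.sum_sum_mul_mul_le_sum_mul_of_mem_doublyStochastic
          (submatrix_mem_doublyStochastic hS _ _)

lemma sum_sq_sub_le_trace (hA : A.IsHermitian) (hB : B.IsHermitian) (hμ : Monovary μA μB)
    (σA : Equiv.Perm ι) (hAe : μA = hA.eigenvalues ∘ σA)
    (σB : Equiv.Perm ι) (hBe : μB = hB.eigenvalues ∘ σB) :
    ∑ i, (μA i - μB i) ^ 2 ≤ trace ((A - B)ᵀ * (A - B)) := by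
  have hAA : trace (A * A) = ∑ i, μA i ^ 2 := by
    rw [hA.trace_mul_self, hAe, ← Equiv.sum_comp σA]; rfl
  have hBB : trace (B * B) = ∑ i, μB i ^ 2 := by
    rw [hB.trace_mul_self, hBe, ← Equiv.sum_comp σB]; rfl
  have hAB := trace_mul_le_sum_mul hA hB hμ σA hAe σB hBe
  have hexpand : trace ((A - B)ᵀ * (A - B)) =
      trace (A * A) + trace (B * B) - 2 * trace (A * B) := by
    rw [← conjTranspose_eq_transpose_of_trivial, (hA.sub hB).eq, sub_mul, mul_sub, mul_sub,
      trace_sub, trace_sub, trace_sub, trace_mul_comm B A]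
    ring
  have hsum : ∑ i, (μA i - μB i) ^ 2 =
      ∑ i, μA i ^ 2 + ∑ i, μB i ^ 2 - 2 * ∑ i, μA i * μB i := by
    rw [← sum_add_distrib, mul_sum, ← sum_sub_distrib]
    exact sum_congr rfl fun i _ => by ring
  rw [hexpand, hAA, hBB, hsum]
  linarith

end Matrix.IsHermitian

/-- Eigenvalue perturbation (Weyl / Hoffman–Wielandt type) bound: if `μA` and `μB`
list the eigenvalues of the symmetric matrices `A` and `B` with multiplicity in
decreasing order, then `|μA i - μB i| ≤ ‖A-B‖` for each `i` and moreover
`(Σᵢ (μA i - μB i)²)^{1/2} ≤ ‖A-B‖` in the Frobenius norm. -/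
theorem stmt12 {n : ℕ} (A B : Matrix (Fin n) (Fin n) ℝ)
    (hA : A.IsHermitian) (hB : B.IsHermitian)
    (μA μB : Fin n → ℝ) (hμA : Antitone μA) (hμB : Antitone μB)
    (σA : Equiv.Perm (Fin n)) (hAe : μA = hA.eigenvalues ∘ σA)
    (σB : Equiv.Perm (Fin n)) (hBe : μB = hB.eigenvalues ∘ σB) :
    (∀ i, |μA i - μB i| ≤ frob (A - B)) ∧
      Real.sqrt (∑ i, (μA i - μB i) ^ 2) ≤ frob (A - B) := by
  have hsum : Real.sqrt (∑ i, (μA i - μB i) ^ 2) ≤ frob (A - B) :=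
    Real.sqrt_le_sqrt (hA.sum_sq_sub_le_trace hB (hμA.monovary hμB) σA hAe σB hBe)
  refine ⟨fun i => ?_, hsum⟩
  calc |μA i - μB i| = Real.sqrt ((μA i - μB i) ^ 2) := (Real.sqrt_sq_eq_abs _).symm
    _ ≤ Real.sqrt (∑ j, (μA j - μB j) ^ 2) :=
        Real.sqrt_le_sqrt (single_le_sum (fun j _ => sq_nonneg (μA j - μB j)) (mem_univ i))
    _ ≤ frob (A - B) := hsum
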